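/- Let T be a non-crossing spanning tree on linearly ordered points p_1,...,p_n, let g_j be a gap and e_j = ρ_T(g_j) the shortest edge of T covering g_j. Then replacing e_j by the boundary edge {p_j,p_{j+1}} yields a non-crossing spanning tree T' = (T - e_j) + {p_j,p_{j+1}}, and every edge of T - e_j keeps its associated gap. -/

import Mathlib

/- Non-crossing spanning trees on linearly ordered points p_0, ..., p_{n-1}.
An edge is a pair (a, b) of indices with a < b < n.
Gap k (for k + 1 < n) lies between points k and k+1. -/

namespace NCST

attribute [local instance] Classical.propDecidable

abbrev Edge := ℕ × ℕ

/-- `e` covers `f`. -/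
def covers (e f : Edge) : Prop := e.1 ≤ f.1 ∧ f.2 ≤ e.2

/-- `e` covers the gap between points `k` and `k+1`. -/
def coversGap (e : Edge) (k : ℕ) : Prop := e.1 ≤ k ∧ k + 1 ≤ e.2

/-- Two edges cross: their endpoints interleave in the linear order. -/
def crosses (e f : Edge) : Prop :=
  (e.1 < f.1 ∧ f.1 < e.2 ∧ e.2 < f.2) ∨ (f.1 < e.1 ∧ e.1 < f.2 ∧ f.2 < e.2)

/-- The length of an edge. -/
def elen (e : Edge) : ℕ := e.2 - e.1

/-- The graph on the `n` points induced by an edge set. -/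
def graphOf (n : ℕ) (E : Finset Edge) : SimpleGraph (Fin n) :=
  SimpleGraph.fromRel (fun a b => ((a : ℕ), (b : ℕ)) ∈ E)

def ValidEdges (n : ℕ) (E : Finset Edge) : Prop := ∀ e ∈ E, e.1 < e.2 ∧ e.2 < n

def NonCrossing (E : Finset Edge) : Prop := ∀ e ∈ E, ∀ f ∈ E, ¬ crosses e f

/-- `E` is the edge set of a non-crossing spanning tree on the points `0, …, n-1`. -/
def IsNCSpanningTree (n : ℕ) (E : Finset Edge) : Prop :=
  ValidEdges n E ∧ NonCrossing E ∧ (graphOf n E).IsTree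

/-- `ρ` assigns to each gap `k` (with `k + 1 < n`) a shortest edge of `E` covering it. -/
def IsRho (n : ℕ) (E : Finset Edge) (ρ : ℕ → Edge) : Prop :=
  ∀ k, k + 1 < n →
    ρ k ∈ E ∧ coversGap (ρ k) k ∧ ∀ f ∈ E, coversGap f k → elen (ρ k) ≤ elen f

/-- `ρ` is a bijection from the gaps `{0, …, n-2}` onto `E`. -/
def RhoBij (n : ℕ) (E : Finset Edge) (ρ : ℕ → Edge) : Prop :=
  (∀ k l, k + 1 < n → l + 1 < n → ρ k = ρ l → k = l) ∧
  (∀ e ∈ E, ∃ k, k + 1 < n ∧ ρ k = e)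

/-- `e` is a short edge for the gap `k`. -/
def isShort (e : Edge) (k : ℕ) : Prop := e = (k, k + 1)

/-- `e` is a near edge for the gap `k`: it covers the gap and shares exactly one
endpoint with `{k, k+1}`. -/
def isNear (e : Edge) (k : ℕ) : Prop :=
  coversGap e k ∧ ((e.1 = k ∧ e.2 ≠ k + 1) ∨ (e.1 ≠ k ∧ e.2 = k + 1))

/-- `e` is a far edge for the gap `k`: it covers the gap and shares no endpoint
with `{k, k+1}`. -/
def isFar (e : Edge) (k : ℕ) : Prop := coversGap e k ∧ e.1 ≠ k ∧ e.2 ≠ k + 1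

/-- The edges of `E` not covered by any other edge of `E`. -/
noncomputable def Uncovered (E : Finset Edge) : Finset Edge :=
  E.filter (fun e => ∀ f ∈ E, f ≠ e → ¬ covers f e)

/-- Gap `i` is a near-near gap: the paired edges differ and are both near. -/
def NearNear (n : ℕ) (ρ ρ' : ℕ → Edge) (i : ℕ) : Prop :=
  i + 1 < n ∧ ρ i ≠ ρ' i ∧ isNear (ρ i) i ∧ isNear (ρ' i) i

/-- Directed edge `g_i → g_j` of the conflict graph `H(T,T')`. -/
def conflictEdge (ρ ρ' : ℕ → Edge) (i j : ℕ) : Prop :=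
  i ≠ j ∧
  (crosses (ρ i) (ρ' j) ∨
   (covers (ρ' j) (ρ i) ∧ coversGap (ρ i) j) ∨
   (covers (ρ i) (ρ' j) ∧ coversGap (ρ' j) i))

/-- The subgraph of the directed graph `R` induced on `S` has no directed cycle. -/
def AcyclicOn (R : ℕ → ℕ → Prop) (S : Set ℕ) : Prop :=
  ∀ a, ¬ Relation.TransGen (fun x y => x ∈ S ∧ y ∈ S ∧ R x y) a a

/-- Two edges are adjacent: they share an endpoint. -/
def adjEdges (e f : Edge) : Prop :=
  e.1 = f.1 ∨ e.1 = f.2 ∨ e.2 = f.1 ∨ e.2 = f.2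

/-! Let `e = ρ j`. Two distinct non-crossing edges covering a common gap are strictly nested, so
for every gap `k ≠ j` under `e` the edge `ρ k` is strictly shorter than `e`. By induction on the
length of `ρ k`, the endpoints of such a gap stay connected in `T - e`: they are joined through
the edge `ρ k` and the gaps beneath it. In `T'` the boundary edge bridges the remaining gap `j`,
so the endpoints of `e` are still connected and `T'` is connected; since it has as many edges as
`T`, it is a tree. The boundary edge covers only the gap `j` and crosses nothing, which leaves the
non-crossing property and the gap assignment of all other edges intact. -/

lemma coversGap_boundary_iff {j k : ℕ} : coversGap (j, j + 1) k ↔ k = j := by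
  simp only [coversGap]
  omega

lemma NonCrossing.mono {E F : Finset Edge} (hF : NonCrossing F) (h : E ⊆ F) : NonCrossing E :=
  fun e he f hf => hF e (h he) f (h hf)

lemma NonCrossing.insert_boundary {E : Finset Edge} (hE : NonCrossing E) (j : ℕ) :
    NonCrossing (insert (j, j + 1) E) := by
  have hb : ∀ f : Edge, ¬ crosses (j, j + 1) f ∧ ¬ crosses f (j, j + 1) := fun f => by
    simp only [crosses]
    omega
  intro e he f hf
  rcases Finset.mem_insert.1 he with rfl | he <;> rcases Finset.mem_insert.1 hf with rfl | hf
  exacts [(hb _).1, (hb _).1, (hb _).2, hE e he f hf]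

section Graph

variable {n : ℕ} {E : Finset Edge}

lemma graphOf_mono {F : Finset Edge} (h : E ⊆ F) : graphOf n E ≤ graphOf n F := by
  intro u v huv
  rw [graphOf, SimpleGraph.fromRel_adj] at huv ⊢
  exact ⟨huv.1, huv.2.imp (@h _) (@h _)⟩

lemma graphOf_adj_of_mem {e : Edge} (he : e ∈ E) (hlt : e.1 < e.2) (h2 : e.2 < n) :
    (graphOf n E).Adj ⟨e.1, by omega⟩ ⟨e.2, h2⟩ := by
  rw [graphOf, SimpleGraph.fromRel_adj]
  exact ⟨by simp [Fin.ext_iff]; omega, Or.inl he⟩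

lemma reachable_of_graphOf_reachable {H : SimpleGraph (Fin n)}
    (h : ∀ u v : Fin n, ((u : ℕ), (v : ℕ)) ∈ E → H.Reachable u v) {u v : Fin n}
    (huv : (graphOf n E).Reachable u v) : H.Reachable u v := by
  rw [SimpleGraph.reachable_iff_reflTransGen] at huv ⊢
  refine Relation.reflTransGen_closed (fun a b hab => ?_) _ _ huv
  rw [graphOf, SimpleGraph.fromRel_adj] at hab
  rw [← SimpleGraph.reachable_iff_reflTransGen]
  rcases hab.2 with hab | hab
  exacts [h a b hab, (h b a hab).symm]

lemma card_edgeSet_graphOf (hE : ValidEdges n E) : Nat.card (graphOf n E).edgeSet = E.card := by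
  rw [Nat.card_coe_set_eq, ← Set.ncard_coe_finset]
  symm
  refine Set.ncard_congr (fun e he => s(⟨e.1, (hE e he).1.trans (hE e he).2⟩, ⟨e.2, (hE e he).2⟩))
    (fun e he => graphOf_adj_of_mem he (hE e he).1 (hE e he).2) (fun e f he hf hef => ?_) ?_
  · have := hE e he
    have := hE f hf
    simp only [Sym2.eq_iff, Fin.mk.injEq] at hef
    ext <;> omega
  · intro s hs
    induction s using Sym2.ind with
    | _ u v =>
      rw [SimpleGraph.mem_edgeSet, graphOf, SimpleGraph.fromRel_adj] at hs
      rcases hs.2 with h | h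
      · exact ⟨_, h, rfl⟩
      · exact ⟨_, h, Sym2.eq_swap⟩

end Graph

section Chain

variable {n : ℕ} {G : SimpleGraph (Fin n)}

lemma reachable_of_forall_reachable_succ {a b : ℕ} (hab : a ≤ b) (hb : b < n)
    (h : ∀ k (hk : k + 1 < n), a ≤ k → k < b → G.Reachable ⟨k, by omega⟩ ⟨k + 1, hk⟩) :
    G.Reachable ⟨a, by omega⟩ ⟨b, hb⟩ := by
  induction b, hab using Nat.le_induction with
  | base => rfl
  | succ b hab ih =>
    exact (ih (by omega) fun k hk h1 h2 => h k hk h1 (by omega)).trans (h b hb hab (by omega))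

lemma reachable_succ_of_reachable_of_forall_ne {a b m : ℕ} (ham : a ≤ m) (hmb : m < b)
    (hb : b < n) (hab : G.Reachable ⟨a, by omega⟩ ⟨b, hb⟩)
    (h : ∀ k (hk : k + 1 < n), a ≤ k → k < b → k ≠ m → G.Reachable ⟨k, by omega⟩ ⟨k + 1, hk⟩) :
    G.Reachable ⟨m, by omega⟩ ⟨m + 1, by omega⟩ :=
  (reachable_of_forall_reachable_succ ham (by omega)
      fun k hk h1 h2 => h k hk h1 (by omega) (by omega)).symm.trans <|
    hab.trans (reachable_of_forall_reachable_succ hmb hb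
      fun k hk h1 h2 => h k hk (by omega) h2 (by omega)).symm

end Chain

section Rho

variable {n : ℕ} {E : Finset Edge} {ρ : ℕ → Edge}

lemma elen_rho_lt_of_coversGap (hNC : NonCrossing E) (hρ : IsRho n E ρ)
    (hinj : ∀ k l, k + 1 < n → l + 1 < n → ρ k = ρ l → k = l)
    {k m : ℕ} (hk : k + 1 < n) (hm : m + 1 < n) (hkm : k ≠ m) (hcov : coversGap (ρ m) k) :
    elen (ρ k) < elen (ρ m) := by
  obtain ⟨hkE, hkk, hkmin⟩ := hρ k hk
  have hle := hkmin _ (hρ m hm).1 hcov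
  have hne : ρ k ≠ ρ m := fun h => hkm (hinj k m hk hm h)
  have hcr := hNC _ hkE _ (hρ m hm).1
  rw [Ne, Prod.ext_iff] at hne
  unfold coversGap elen crosses at *
  omega

theorem reachable_succ_erase_of_elen_rho_lt (hval : ValidEdges n E) (hNC : NonCrossing E)
    (hρ : IsRho n E ρ) (hinj : ∀ k l, k + 1 < n → l + 1 < n → ρ k = ρ l → k = l)
    (e : Edge) {m : ℕ} (hm : m + 1 < n) (hlt : elen (ρ m) < elen e) :
    (graphOf n (E.erase e)).Reachable ⟨m, by omega⟩ ⟨m + 1, hm⟩ := by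
  induction hℓ : elen (ρ m) using Nat.strong_induction_on generalizing m with
  | _ ℓ ih =>
    obtain ⟨hmE, hcov, -⟩ := hρ m hm
    have hne : ρ m ≠ e := by
      rintro rfl
      omega
    obtain ⟨h1, h2⟩ := hval _ hmE
    refine reachable_succ_of_reachable_of_forall_ne hcov.1 hcov.2 h2
      (graphOf_adj_of_mem (Finset.mem_erase.2 ⟨hne, hmE⟩) h1 h2).reachable ?_
    intro k hk hk1 hk2 hkm
    have := elen_rho_lt_of_coversGap hNC hρ hinj hk hm hkm ⟨hk1, hk2⟩
    exact ih _ (by omega) hk (by omega) rfl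

lemma boundary_notMem_erase_rho (hρ : IsRho n E ρ) {j : ℕ} (hj : j + 1 < n) :
    (j, j + 1) ∉ E.erase (ρ j) := by
  intro hb
  obtain ⟨hne, hbE⟩ := Finset.mem_erase.1 hb
  obtain ⟨-, hcov, hmin⟩ := hρ j hj
  have := hmin _ hbE ⟨le_rfl, le_rfl⟩
  unfold coversGap elen at *
  exact hne (Prod.ext (by simp only; omega) (by simp only; omega))

end Rho

section Exchange

variable {n : ℕ} {T : Finset Edge} {ρ : ℕ → Edge} {j : ℕ}

theorem IsNCSpanningTree.connected_insert_boundary_erase_rho (hT : IsNCSpanningTree n T)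
    (hρ : IsRho n T ρ) (hinj : ∀ k l, k + 1 < n → l + 1 < n → ρ k = ρ l → k = l)
    (hj : j + 1 < n) : (graphOf n (insert (j, j + 1) (T.erase (ρ j)))).Connected := by
  obtain ⟨hval, hNC, htree⟩ := hT
  set G' := graphOf n (insert (j, j + 1) (T.erase (ρ j)))
  have heT := (hρ j hj).1
  obtain ⟨he1, he2⟩ := hval _ heT
  have hgap : ∀ k (hk : k + 1 < n), (ρ j).1 ≤ k → k < (ρ j).2 →
      G'.Reachable ⟨k, by omega⟩ ⟨k + 1, hk⟩ := by
    intro k hk hk1 hk2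
    rcases eq_or_ne k j with rfl | hkj
    · exact (graphOf_adj_of_mem (Finset.mem_insert_self _ _) (by simp) hk).reachable
    · exact (reachable_succ_erase_of_elen_rho_lt hval hNC hρ hinj (ρ j) hk
        (elen_rho_lt_of_coversGap hNC hρ hinj hk hj hkj ⟨hk1, hk2⟩)).mono
        (graphOf_mono (Finset.subset_insert _ _))
  have hρj := reachable_of_forall_reachable_succ he1.le he2 hgap
  have := htree.connected.nonempty
  refine ⟨fun u v => reachable_of_graphOf_reachable (fun x y hxy => ?_)
    (htree.connected.preconnected u v)⟩
  by_cases hxye : ((x : ℕ), (y : ℕ)) = ρ j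
  · obtain rfl : x = ⟨(ρ j).1, by omega⟩ := Fin.ext (congrArg Prod.fst hxye)
    obtain rfl : y = ⟨(ρ j).2, he2⟩ := Fin.ext (congrArg Prod.snd hxye)
    exact hρj
  · exact (graphOf_adj_of_mem (Finset.mem_insert_of_mem (Finset.mem_erase.2 ⟨hxye, hxy⟩))
      (hval _ hxy).1 (hval _ hxy).2).reachable

theorem IsNCSpanningTree.insert_boundary_erase_rho (hT : IsNCSpanningTree n T)
    (hρ : IsRho n T ρ) (hinj : ∀ k l, k + 1 < n → l + 1 < n → ρ k = ρ l → k = l)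
    (hj : j + 1 < n) : IsNCSpanningTree n (insert (j, j + 1) (T.erase (ρ j))) := by
  have hconn := hT.connected_insert_boundary_erase_rho hρ hinj hj
  obtain ⟨hval, hNC, htree⟩ := hT
  have hval' : ValidEdges n (insert (j, j + 1) (T.erase (ρ j))) := by
    intro e he
    rcases Finset.mem_insert.1 he with rfl | he
    exacts [⟨by simp, hj⟩, hval e (Finset.mem_of_mem_erase he)]
  refine ⟨hval', (hNC.mono (Finset.erase_subset _ _)).insert_boundary j, ?_⟩
  rw [SimpleGraph.isTree_iff_connected_and_card, card_edgeSet_graphOf hval',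
    Finset.card_insert_of_notMem (boundary_notMem_erase_rho hρ hj),
    Finset.card_erase_add_one (hρ j hj).1, ← card_edgeSet_graphOf hval]
  exact ⟨hconn, (SimpleGraph.isTree_iff_connected_and_card.1 htree).2⟩

theorem IsRho.insert_boundary_erase_rho (hρ : IsRho n T ρ)
    (hinj : ∀ k l, k + 1 < n → l + 1 < n → ρ k = ρ l → k = l) (hj : j + 1 < n) :
    IsRho n (insert (j, j + 1) (T.erase (ρ j))) (Function.update ρ j (j, j + 1)) := by
  intro k hk
  rcases eq_or_ne k j with rfl | hkj
  · rw [Function.update_self]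
    refine ⟨Finset.mem_insert_self _ _, coversGap_boundary_iff.2 rfl, fun f _ hf => ?_⟩
    unfold coversGap elen at *
    omega
  · obtain ⟨hkT, hcov, hmin⟩ := hρ k hk
    rw [Function.update_of_ne hkj]
    refine ⟨Finset.mem_insert_of_mem (Finset.mem_erase.2 ⟨fun h => hkj (hinj k j hk hj h), hkT⟩),
      hcov, fun f hf hfk => ?_⟩
    rcases Finset.mem_insert.1 hf with rfl | hf
    · exact absurd (coversGap_boundary_iff.1 hfk) hkj
    · exact hmin f (Finset.mem_of_mem_erase hf) hfk

theorem RhoBij.insert_boundary_erase_rho (hbij : RhoBij n T ρ) (hρ : IsRho n T ρ)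
    (hj : j + 1 < n) :
    RhoBij n (insert (j, j + 1) (T.erase (ρ j))) (Function.update ρ j (j, j + 1)) := by
  have hboundary : ∀ k, k + 1 < n → Function.update ρ j (j, j + 1) k = (j, j + 1) → k = j := by
    intro k hk hkb
    by_contra hkj
    rw [Function.update_of_ne hkj] at hkb
    exact hkj (coversGap_boundary_iff.1 (hkb ▸ (hρ k hk).2.1))
  refine ⟨fun k l hk hl hkl => ?_, fun e he => ?_⟩
  · rcases eq_or_ne k j with rfl | hkj
    · rw [Function.update_self] at hkl
      exact (hboundary l hl hkl.symm).symm
    rcases eq_or_ne l j with rfl | hlj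
    · rw [Function.update_self] at hkl
      exact hboundary k hk hkl
    rw [Function.update_of_ne hkj, Function.update_of_ne hlj] at hkl
    exact hbij.1 k l hk hl hkl
  · rcases Finset.mem_insert.1 he with rfl | he
    · exact ⟨j, hj, Function.update_self _ _ _⟩
    obtain ⟨hne, heT⟩ := Finset.mem_erase.1 he
    obtain ⟨k, hk, rfl⟩ := hbij.2 e heT
    have hkj : k ≠ j := by
      rintro rfl
      exact hne rfl
    exact ⟨k, hk, Function.update_of_ne hkj _ _⟩

end Exchange

/-- replacing the edge `e_j = ρ_T(g_j)` by the boundary edge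
`{p_j, p_{j+1}}` yields a non-crossing spanning tree in which every edge of
`T - e_j` keeps its associated gap. -/
theorem stmt14 (n : ℕ) (T : Finset Edge) (ρ : ℕ → Edge) (j : ℕ)
    (hT : IsNCSpanningTree n T) (hρ : IsRho n T ρ) (hbij : RhoBij n T ρ)
    (hj : j + 1 < n) :
    IsNCSpanningTree n (insert (j, j + 1) (T.erase (ρ j))) ∧
    IsRho n (insert (j, j + 1) (T.erase (ρ j))) (Function.update ρ j (j, j + 1)) ∧
    RhoBij n (insert (j, j + 1) (T.erase (ρ j))) (Function.update ρ j (j, j + 1)) :=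
  ⟨hT.insert_boundary_erase_rho hρ hbij.1 hj, hρ.insert_boundary_erase_rho hbij.1 hj,
    hbij.insert_boundary_erase_rho hρ hj⟩

end NCST
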